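/- arXiv:2601.18977 — 7 statements merged into one kernel-verified Lean document; each statement's English description precedes it below -/
import Mathlib

section
/- (Desnanot–Jacobi / Dodgson condensation) For n ≥ 3 and any n×n real matrix A, det(A)·det(A_{n-2}(2,2)) = det(A_{n-1}(1,1))·det(A_{n-1}(2,2)) − det(A_{n-1}(1,2))·det(A_{n-1}(2,1)), where A_r(i,j) is the r×r contiguous submatrix of A with rows i,…,i+r−1 and columns j,…,j+r−1. -/
/-!
Replace columns `0` and `last` of the identity matrix by the corresponding columns of `adj A`,
giving a matrix `C`. Since `A * adj A = det A • 1`, the product `A * C` is block triangular with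
diagonal blocks `det A • 1₂` and the interior minor of `A`, while `C` is block triangular with
diagonal blocks the `2 × 2` corner minor of `adj A` and `1`. Taking determinants,
`det A * (corner minor of adj A) = det A ^ 2 * (interior minor of A)`. The factor `det A` cancels
for the generic matrix over `ℤ[x_ij]`, a domain, and hence for every matrix by specialization.
Finally, the four corner entries of `adj A` are, up to signs that cancel in pairs, the four
`(n + 2)`-minors on the right-hand side.
-/

namespace Matrix

variable {R : Type*} [CommRing R]

section Blocks

variable {k m : Type*} [Fintype k] [Fintype m] [DecidableEq k] [DecidableEq m]

theorem mul_fromBlocks_adjugate_one (A : Matrix (k ⊕ m) (k ⊕ m) R) :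
    A * fromBlocks (adjugate A).toBlocks₁₁ 0 (adjugate A).toBlocks₂₁ 1 =
      fromBlocks (A.det • 1) A.toBlocks₁₂ 0 A.toBlocks₂₂ := by
  ext i (a | b)
  · have h := congr_fun₂ (mul_adjugate A) i (Sum.inl a)
    rw [mul_apply, Fintype.sum_sum_type] at h
    rcases i with i | i <;>
      simpa [mul_apply, Fintype.sum_sum_type, toBlocks₁₁, toBlocks₂₁, one_apply] using h
  · rcases i with i | i <;>
      simp [mul_apply, Fintype.sum_sum_type, toBlocks₁₂, toBlocks₂₂, one_apply]

theorem det_mul_det_submatrix_inl_adjugate (A : Matrix (k ⊕ m) (k ⊕ m) R) :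
    A.det * ((adjugate A).submatrix Sum.inl Sum.inl).det =
      A.det ^ Fintype.card k * (A.submatrix Sum.inr Sum.inr).det := by
  have h := congr_arg det (mul_fromBlocks_adjugate_one A)
  rw [det_mul, det_fromBlocks_zero₁₂, det_fromBlocks_zero₂₁, det_one, mul_one, det_smul,
    det_one, mul_one] at h
  exact h

theorem det_submatrix_inl_adjugate [Nonempty k] (A : Matrix (k ⊕ m) (k ⊕ m) R) :
    ((adjugate A).submatrix Sum.inl Sum.inl).det =
      A.det ^ (Fintype.card k - 1) * (A.submatrix Sum.inr Sum.inr).det := by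
  let X := mvPolynomialX (k ⊕ m) (k ⊕ m) ℤ
  suffices (X.adjugate.submatrix Sum.inl Sum.inl).det =
      X.det ^ (Fintype.card k - 1) * (X.submatrix Sum.inr Sum.inr).det by
    let φ : MvPolynomial ((k ⊕ m) × (k ⊕ m)) ℤ →ₐ[ℤ] R := MvPolynomial.aeval fun p => A p.1 p.2
    have hX : X.map φ = A := mvPolynomialX_mapMatrix_aeval ℤ A
    have hadj : X.adjugate.map φ = A.adjugate := hX ▸ φ.map_adjugate X
    simpa [AlgHom.map_det, ← submatrix_map, hX, hadj] using congr_arg φ this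
  apply mul_left_cancel₀ (det_mvPolynomialX_ne_zero (k ⊕ m) ℤ)
  rw [det_mul_det_submatrix_inl_adjugate, ← mul_assoc, ← pow_succ',
    Nat.sub_add_cancel Fintype.card_pos]

end Blocks

noncomputable def finEndsSumInteriorEquiv (n : ℕ) : Fin 2 ⊕ Fin (n + 1) ≃ Fin (n + 3) :=
  Equiv.ofBijective (Sum.elim ![0, Fin.last (n + 2)] fun i => i.succ.castSucc) <| by
    rw [Fintype.bijective_iff_injective_and_card]
    refine ⟨?_, by simp; omega⟩
    rintro (a | a) (b | b) h <;>
      simp only [Sum.elim_inl, Sum.elim_inr, Sum.inl.injEq, Sum.inr.injEq, reduceCtorEq] at h ⊢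
    · fin_cases a <;> fin_cases b <;> simp at h ⊢
    · fin_cases a <;> rw [Fin.ext_iff] at h <;> simp at h
      omega
    · fin_cases b <;> rw [Fin.ext_iff] at h <;> simp at h
      omega
    · simpa using h

theorem adjugate_corners_det_eq (n : ℕ) (A : Matrix (Fin (n + 3)) (Fin (n + 3)) R) :
    adjugate A 0 0 * adjugate A (Fin.last _) (Fin.last _) -
        adjugate A 0 (Fin.last _) * adjugate A (Fin.last _) 0 =
      A.det * (A.submatrix (fun i : Fin (n + 1) => i.succ.castSucc)
        (fun i : Fin (n + 1) => i.succ.castSucc)).det := by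
  have h := det_submatrix_inl_adjugate
    (A.submatrix (finEndsSumInteriorEquiv n) (finEndsSumInteriorEquiv n))
  rw [adjugate_submatrix_equiv_self, det_submatrix_equiv_self, det_fin_two] at h
  simpa [finEndsSumInteriorEquiv] using h

theorem det_mul_det_submatrix_succ_castSucc (n : ℕ) (A : Matrix (Fin (n + 3)) (Fin (n + 3)) R) :
    A.det * (A.submatrix (fun k : Fin (n + 1) => k.succ.castSucc)
        (fun k : Fin (n + 1) => k.succ.castSucc)).det =
      (A.submatrix (fun k : Fin (n + 2) => k.castSucc) (fun k : Fin (n + 2) => k.castSucc)).det *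
          (A.submatrix (fun k : Fin (n + 2) => k.succ) (fun k : Fin (n + 2) => k.succ)).det -
        (A.submatrix (fun k : Fin (n + 2) => k.castSucc) (fun k : Fin (n + 2) => k.succ)).det *
          (A.submatrix (fun k : Fin (n + 2) => k.succ) (fun k : Fin (n + 2) => k.castSucc)).det := by
  rw [← adjugate_corners_det_eq]
  simp only [adjugate_fin_succ_eq_det_submatrix, Fin.succAbove_zero, Fin.succAbove_last,
    Fin.val_zero, Fin.val_last, add_zero, zero_add]
  have hsign : (-1 : R) ^ (n + 2 + (n + 2)) = 1 := (Even.add_self _).neg_one_pow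
  linear_combination ((A.submatrix Fin.succ Fin.succ).det *
      (A.submatrix Fin.castSucc Fin.castSucc).det -
    (A.submatrix Fin.castSucc Fin.succ).det * (A.submatrix Fin.succ Fin.castSucc).det) * hsign

end Matrix

/-- Desnanot–Jacobi (Dodgson condensation), stated for matrices of size `n + 3 ≥ 3`. -/
theorem stmt_5 (n : ℕ) (A : Matrix (Fin (n + 3)) (Fin (n + 3)) ℝ) :
    A.det * (A.submatrix (fun k : Fin (n + 1) => k.succ.castSucc)
        (fun k : Fin (n + 1) => k.succ.castSucc)).det =
      (A.submatrix (fun k : Fin (n + 2) => k.castSucc) (fun k : Fin (n + 2) => k.castSucc)).det *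
          (A.submatrix (fun k : Fin (n + 2) => k.succ) (fun k : Fin (n + 2) => k.succ)).det -
        (A.submatrix (fun k : Fin (n + 2) => k.castSucc) (fun k : Fin (n + 2) => k.succ)).det *
          (A.submatrix (fun k : Fin (n + 2) => k.succ) (fun k : Fin (n + 2) => k.castSucc)).det :=
  Matrix.det_mul_det_submatrix_succ_castSucc n A
end

section
/- (Johnson's conjecture) Let n ≥ 2 and let A be an n×n real Toeplitz matrix satisfying A + Aᵀ = 2·J_n, where J_n is the all-ones matrix. Then det A_{n-1}(1,2) + det A_{n-1}(2,1) = 2·det A_{n-1}(1,1). -/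
/-!
Write `A = J + B`, where `B` is an alternating Toeplitz matrix. Every such `B` is a specialization
of the generic one, with entries `X k - X (-k)` in the domain `MvPolynomial ℤ ℤ`; there an identity
may be cancelled by any factor that does not vanish at the tridiagonal specialization `b₁ = 1`,
`bₖ = 0` for `k > 1`.

If `A` has even size `N`, the three minors are corner entries of `adj A`, and by shift invariance
the claim reads `v ⬝ adj A v = 0` for `v = e₁ + e_N`. As `B` is skew and persymmetric, `adj B v`
has zero sum, so `A (adj B v) = det B • v`; hence `det B * (v ⬝ adj A v) = det A * (v ⬝ adj B v)`,
which vanishes because `adj B` is skew.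

If `A` has odd size, the matrix determinant lemma `det (M + J) = det M + 𝟙 ⬝ adj M 𝟙` reduces the
claim to `det C = det B₀` for `C = B(1,2)` and `B₀ = B(1,1)`. Being skew of odd size, `B` is
singular, so `adj B` has rank one, and its corner entries give `(det C)² = (det B₀)²`; the sign is
read off at the tridiagonal specialization, where both determinants are `1`.
-/

namespace Matrix

local notation "J" => Matrix.of fun _ _ => 1

section Toeplitz

variable {α : Type*}

def toeplitz (m : ℕ) (a : ℤ → α) : Matrix (Fin m) (Fin m) α :=
  of fun i j => a ((j : ℤ) - i)

variable {m N : ℕ} (a : ℤ → α)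

@[simp]
theorem toeplitz_apply (i j : Fin m) : toeplitz m a i j = a ((j : ℤ) - i) := rfl

theorem exists_eq_toeplitz [Zero α] {A : Matrix (Fin N) (Fin N) α}
    (hA : ∀ i j i' j' : Fin N, (i : ℕ) + (j' : ℕ) = (i' : ℕ) + (j : ℕ) → A i j = A i' j') :
    ∃ a, A = toeplitz N a := by
  refine ⟨fun k => if h : (-k).toNat < N ∧ k.toNat < N then A ⟨_, h.1⟩ ⟨_, h.2⟩ else 0, ?_⟩
  ext i j
  rw [toeplitz_apply, dif_pos (by omega)]
  exact hA _ _ _ _ (by simp only; omega)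

theorem toeplitz_submatrix {f g : Fin m → Fin N} (d : ℤ)
    (h : ∀ i j, ((g j : ℕ) : ℤ) - (f i : ℕ) = (j : ℤ) - i + d) :
    (toeplitz N a).submatrix f g = toeplitz m fun k => a (k + d) := by
  ext i j; simp [h]

theorem toeplitz_submatrix_succ_succ :
    (toeplitz (m + 1) a).submatrix Fin.succ Fin.succ = toeplitz m a := by
  simpa using toeplitz_submatrix a 0 (f := Fin.succ) (g := Fin.succ) (by simp)

theorem toeplitz_submatrix_castSucc_castSucc :
    (toeplitz (m + 1) a).submatrix Fin.castSucc Fin.castSucc = toeplitz m a := by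
  simpa using toeplitz_submatrix a 0 (f := Fin.castSucc) (g := Fin.castSucc) (by simp)

theorem toeplitz_submatrix_rev : (toeplitz m a).submatrix Fin.rev Fin.rev = (toeplitz m a)ᵀ := by
  ext i j; simp only [submatrix_apply, toeplitz_apply, transpose_apply, Fin.val_rev]; congr 1; omega

theorem toeplitz_transpose_eq_neg [Neg α] {s : ℤ → α} (hs : ∀ k, s (-k) = -s k) :
    (toeplitz m s)ᵀ = -toeplitz m s := by
  ext i j; simp [← hs]

end Toeplitz

section Adjugate

variable {n α : Type*} [Fintype n] [CommRing α]

section CharZero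

variable [NoZeroDivisors α] [CharZero α]

theorem dotProduct_mulVec_self_eq_zero {K : Matrix n n α} (hK : Kᵀ = -K) (x : n → α) :
    x ⬝ᵥ (K *ᵥ x) = 0 := by
  rw [← CharZero.eq_neg_self_iff]
  conv_lhs => rw [dotProduct_mulVec, ← mulVec_transpose, hK, neg_mulVec, dotProduct_comm]
  rw [dotProduct_neg]

end CharZero

variable [DecidableEq n]

theorem det_add_replicateCol_mul_replicateRow_eq_add_adjugate {ι : Type*} [Unique ι]
    (A : Matrix n n α) (u v : n → α) :
    (A + replicateCol ι u * replicateRow ι v).det = A.det + v ⬝ᵥ (adjugate A *ᵥ u) := by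
  have partial_sums : ∀ S : Finset n,
      (of fun i j => A i j + if i ∈ S then u i * v j else 0).det
        = A.det + ∑ i ∈ S, u i * (A.updateRow i v).det := by
    intro S
    induction S using Finset.induction_on with
    | empty => simp only [Finset.notMem_empty, if_false, add_zero, Finset.sum_empty]; rfl
    | insert i S hi ih =>
      set M := of fun i j => A i j + if i ∈ S then u i * v j else 0
      have hrow : (of fun i' j => A i' j + if i' ∈ insert i S then u i' * v j else 0)
          = M.updateRow i (M i + u i • v) := by
        ext i' j
        by_cases h : i' = i
        · subst h; simp [M, hi]
        · simp [M, h]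
      have hdet : (M.updateRow i v).det = (A.updateRow i v).det :=
        det_eq_of_forall_row_eq_smul_add_const (fun k => if k ∈ S then u k else 0) i
          (by simp [hi]) fun k j => by
            by_cases h : k = i
            · subst h; simp [hi]
            · simp [M, h]
      rw [hrow, det_updateRow_add, updateRow_eq_self, det_updateRow_smul, hdet, ih,
        Finset.sum_insert hi]
      ring
  have hA : A + replicateCol ι u * replicateRow ι v
      = of fun i j => A i j + if i ∈ Finset.univ then u i * v j else 0 := by
    ext i j; simp [replicateCol, replicateRow, Matrix.mul_apply]
  rw [hA, partial_sums]
  congr 1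
  simp_rw [← cramer_transpose_apply, cramer_eq_adjugate_mulVec, ← adjugate_transpose,
    mulVec_transpose, dotProduct_mulVec]
  exact Finset.sum_congr rfl fun i _ => mul_comm _ _

theorem det_add_ones (A : Matrix n n α) :
    (A + J).det = A.det + 1 ⬝ᵥ (adjugate A *ᵥ 1) := by
  have hJ : (J : Matrix n n α)
      = replicateCol Unit (fun _ : n => (1 : α)) * replicateRow Unit (fun _ : n => (1 : α)) := by
    ext i j; simp [replicateCol, replicateRow, Matrix.mul_apply]
  rw [hJ, det_add_replicateCol_mul_replicateRow_eq_add_adjugate]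
  rfl

theorem adjugate_neg_of_even (h : Even (Fintype.card n)) (A : Matrix n n α) :
    adjugate (-A) = -adjugate A := by
  rcases (Fintype.card n).eq_zero_or_pos with h0 | hpos
  · have : IsEmpty n := Fintype.card_eq_zero_iff.mp h0
    exact Subsingleton.elim _ _
  have hodd : Odd (Fintype.card n - 1) := by
    obtain ⟨k, hk⟩ := h; exact ⟨k - 1, by omega⟩
  rw [← neg_one_smul α A, adjugate_smul, hodd.neg_one_pow, neg_one_smul]

theorem adjugate_transpose_eq_neg {A : Matrix n n α} (hA : Aᵀ = -A) (h : Even (Fintype.card n)) :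
    (adjugate A)ᵀ = -adjugate A := by
  rw [adjugate_transpose, hA, adjugate_neg_of_even h]

theorem det_add_ones_add_det_neg_transpose_add_ones (h : Even (Fintype.card n))
    (A : Matrix n n α) :
    (A + J).det + (-Aᵀ + J).det = 2 * A.det := by
  rw [det_add_ones, det_add_ones, adjugate_neg_of_even h, det_neg, det_transpose, h.neg_one_pow,
    ← adjugate_transpose, neg_mulVec, dotProduct_neg, mulVec_transpose, dotProduct_mulVec,
    dotProduct_comm 1 (1 ᵥ* adjugate A)]
  ring

theorem adjugate_mul_apply_eq_of_mulVec_eq_zero {A : Matrix n n α} {u : n → α}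
    (hu : A *ᵥ u = 0) (r c d : n) : adjugate A c r * u d = adjugate A d r * u c := by
  set M := A.updateRow r (Pi.single c 1)
  have hMu : M *ᵥ u = Pi.single r (u c) := by
    ext i
    by_cases h : i = r
    · subst h; simp [M, mulVec, single_dotProduct]
    · simpa [M, mulVec, h, updateRow_ne h] using congrFun hu i
  have hcol := congrFun (congrArg (adjugate M *ᵥ ·) hMu) d
  simp only [mulVec_mulVec, adjugate_mul, smul_mulVec, one_mulVec, mulVec_single] at hcol
  have hM : adjugate M d r = adjugate A d r := by
    rw [adjugate_apply, adjugate_apply, updateRow_idem]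
  simpa [adjugate_apply A c r, hM] using hcol

theorem adjugate_mul_adjugate_of_det_eq_zero {A : Matrix n n α} (h : A.det = 0) (i j k l : n) :
    adjugate A i k * adjugate A j l = adjugate A j k * adjugate A i l := by
  have hker : A *ᵥ (fun d => adjugate A d l) = 0 := by
    ext i
    simpa [h, mulVec, dotProduct, mul_apply] using congrFun (congrFun (mul_adjugate A) i) l
  exact adjugate_mul_apply_eq_of_mulVec_eq_zero hker k i j

section CharZero

variable [NoZeroDivisors α] [CharZero α]

theorem det_eq_zero_of_transpose_eq_neg {A : Matrix n n α} (hA : Aᵀ = -A)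
    (h : Odd (Fintype.card n)) : A.det = 0 := by
  rw [← CharZero.eq_neg_self_iff]
  conv_lhs => rw [← det_transpose, hA, det_neg, h.neg_one_pow, neg_one_mul]

theorem det_add_ones_of_transpose_eq_neg {A : Matrix n n α} (hA : Aᵀ = -A)
    (h : Even (Fintype.card n)) : (A + J).det = A.det := by
  rw [det_add_ones, dotProduct_mulVec_self_eq_zero (adjugate_transpose_eq_neg hA h), add_zero]

theorem det_mul_dotProduct_adjugate_add_ones_eq_zero {B : Matrix n n α} (hB : Bᵀ = -B)
    (h : Even (Fintype.card n)) (e : n ≃ n) (he : B.submatrix e e = -B) {v : n → α}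
    (hv : ∀ i, v (e i) = v i) :
    B.det * (v ⬝ᵥ (adjugate (B + J) *ᵥ v)) = 0 := by
  set A := B + J
  set y := adjugate B *ᵥ v
  have hy_sum : ∑ i, y i = 0 := by
    have hadj : (adjugate B).submatrix e e = -adjugate B := by
      rw [← adjugate_submatrix_equiv_self, he, adjugate_neg_of_even h]
    rw [← CharZero.eq_neg_self_iff]
    calc ∑ i, y i = ∑ i, y (e i) := (Equiv.sum_comp e y).symm
      _ = ∑ i, ((adjugate B).submatrix e e *ᵥ v) i := by
        congr 1; ext i
        simp only [y, mulVec, dotProduct, submatrix_apply]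
        exact (Equiv.sum_comp e _).symm.trans (by simp [hv])
      _ = -∑ i, y i := by simp [hadj, y, neg_mulVec]
  have hAy : A *ᵥ y = B.det • v := by
    have hJy : (J : Matrix n n α) *ᵥ y = 0 := by
      ext i; simpa [mulVec, dotProduct] using hy_sum
    rw [add_mulVec, hJy, add_zero, mulVec_mulVec, mul_adjugate, smul_mulVec, one_mulVec]
  have key : A.det • y = B.det • (adjugate A *ᵥ v) := by
    calc A.det • y = adjugate A *ᵥ (A *ᵥ y) := by
          rw [mulVec_mulVec, adjugate_mul, smul_mulVec, one_mulVec]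
      _ = B.det • (adjugate A *ᵥ v) := by rw [hAy, mulVec_smul]
  have := congrArg (v ⬝ᵥ ·) key
  simp only [dotProduct_smul, smul_eq_mul, y,
    dotProduct_mulVec_self_eq_zero (adjugate_transpose_eq_neg hB h), mul_zero] at this
  exact this.symm

end CharZero

end Adjugate

section Corners

variable {α : Type*} [CommRing α] {m : ℕ}

/-- The Desnanot–Jacobi identity for a singular matrix. -/
theorem det_submatrix_succ_succ_mul_det_submatrix_castSucc_castSucc_of_det_eq_zero
    {A : Matrix (Fin (m + 1)) (Fin (m + 1)) α} (h : A.det = 0) :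
    (A.submatrix Fin.succ Fin.succ).det * (A.submatrix Fin.castSucc Fin.castSucc).det
      = (A.submatrix Fin.succ Fin.castSucc).det * (A.submatrix Fin.castSucc Fin.succ).det := by
  have := adjugate_mul_adjugate_of_det_eq_zero h 0 (Fin.last m) 0 (Fin.last m)
  simp only [adjugate_fin_succ_eq_det_submatrix, Fin.succAbove_zero, Fin.succAbove_last,
    Fin.val_zero, Fin.val_last, add_zero, zero_add, pow_zero, one_mul,
    (Even.neg_one_pow ⟨m, rfl⟩ : (-1 : α) ^ (m + m) = 1)] at this
  have hsign : (-1 : α) ^ m * (-1) ^ m = 1 := by rw [← pow_add]; exact Even.neg_one_pow ⟨m, rfl⟩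
  linear_combination this + (A.submatrix Fin.succ Fin.castSucc).det
    * (A.submatrix Fin.castSucc Fin.succ).det * hsign

theorem single_zero_add_single_last_dotProduct_adjugate_mulVec
    (A : Matrix (Fin (m + 1)) (Fin (m + 1)) α) :
    (Pi.single 0 1 + Pi.single (Fin.last m) 1) ⬝ᵥ
        (adjugate A *ᵥ (Pi.single 0 1 + Pi.single (Fin.last m) 1))
      = (A.submatrix Fin.succ Fin.succ).det + (A.submatrix Fin.castSucc Fin.castSucc).det
        + (-1) ^ m * ((A.submatrix Fin.castSucc Fin.succ).det
          + (A.submatrix Fin.succ Fin.castSucc).det) := by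
  simp only [mulVec_add, mulVec_single_one, add_dotProduct, single_dotProduct, Pi.add_apply,
    col_apply, one_mul, adjugate_fin_succ_eq_det_submatrix, Fin.succAbove_zero, Fin.succAbove_last,
    Fin.val_zero, Fin.val_last, add_zero, zero_add, pow_zero, one_mul,
    (Even.neg_one_pow ⟨m, rfl⟩ : (-1 : α) ^ (m + m) = 1)]
  ring

def johnsonDefect {m : ℕ} (A : Matrix (Fin (m + 1)) (Fin (m + 1)) α) : α :=
  (A.submatrix Fin.castSucc Fin.succ).det + (A.submatrix Fin.succ Fin.castSucc).det
    - 2 * (A.submatrix Fin.castSucc Fin.castSucc).det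

theorem _root_.RingHom.map_johnsonDefect {β : Type*} [CommRing β] (f : α →+* β) {m : ℕ}
    (A : Matrix (Fin (m + 1)) (Fin (m + 1)) α) :
    f A.johnsonDefect = (f.mapMatrix A).johnsonDefect := by
  simp [johnsonDefect, RingHom.map_det, RingHom.mapMatrix_apply, submatrix_map, map_ofNat]

end Corners

section SkewToeplitz

variable {α : Type*} [CommRing α] {m : ℕ} {s : ℤ → α}

theorem toeplitz_submatrix_succ_castSucc_eq_neg_transpose (hs : ∀ k, s (-k) = -s k) :
    (toeplitz (m + 1) s).submatrix Fin.succ Fin.castSucc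
      = -((toeplitz (m + 1) s).submatrix Fin.castSucc Fin.succ)ᵀ := by
  rw [transpose_submatrix, toeplitz_transpose_eq_neg hs]
  ext i j; simp

variable [NoZeroDivisors α] [CharZero α]

theorem det_toeplitz_mul_johnsonDefect_eq_zero (hs : ∀ k, s (-k) = -s k) (hm : Odd m) :
    (toeplitz (m + 1) s).det * (toeplitz (m + 1) s + J).johnsonDefect = 0 := by
  have hv : ∀ i, (Pi.single 0 1 + Pi.single (Fin.last m) 1 : Fin (m + 1) → α) (Fin.revPerm i)
      = (Pi.single 0 1 + Pi.single (Fin.last m) 1 : Fin (m + 1) → α) i := by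
    intro i
    simp only [Pi.add_apply, Pi.single_apply, Fin.revPerm_apply, Fin.rev_eq_iff, Fin.rev_zero,
      Fin.rev_last]
    ring
  have key := det_mul_dotProduct_adjugate_add_ones_eq_zero (toeplitz_transpose_eq_neg hs)
    (by simpa using hm.add_one) Fin.revPerm
    ((toeplitz_submatrix_rev s).trans (toeplitz_transpose_eq_neg hs)) hv
  have hshift : (toeplitz (m + 1) s + J).submatrix Fin.succ Fin.succ
      = (toeplitz (m + 1) s + J).submatrix Fin.castSucc Fin.castSucc := by
    simp only [submatrix_add, Pi.add_apply, toeplitz_submatrix_succ_succ,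
      toeplitz_submatrix_castSucc_castSucc]
    rfl
  rw [single_zero_add_single_last_dotProduct_adjugate_mulVec, hshift, hm.neg_one_pow] at key
  unfold johnsonDefect
  linear_combination -key

theorem sq_det_toeplitz_submatrix_castSucc_succ (hs : ∀ k, s (-k) = -s k) (hm : Even m) :
    ((toeplitz (m + 1) s).submatrix Fin.castSucc Fin.succ).det ^ 2 = (toeplitz m s).det ^ 2 := by
  have hdet : (toeplitz (m + 1) s).det = 0 :=
    det_eq_zero_of_transpose_eq_neg (toeplitz_transpose_eq_neg hs) (by simpa using hm.add_one)
  have := det_submatrix_succ_succ_mul_det_submatrix_castSucc_castSucc_of_det_eq_zero hdet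
  rw [toeplitz_submatrix_succ_castSucc_eq_neg_transpose hs, det_neg, det_transpose,
    Fintype.card_fin, hm.neg_one_pow, one_mul, toeplitz_submatrix_succ_succ,
    toeplitz_submatrix_castSucc_castSucc] at this
  rw [sq, sq, this]

theorem johnsonDefect_toeplitz_add_ones (hs : ∀ k, s (-k) = -s k) (hm : Even m) :
    (toeplitz (m + 1) s + J).johnsonDefect
      = 2 * (((toeplitz (m + 1) s).submatrix Fin.castSucc Fin.succ).det - (toeplitz m s).det) := by
  have hsub : ∀ f g : Fin m → Fin (m + 1),
      (toeplitz (m + 1) s + J).submatrix f g = (toeplitz (m + 1) s).submatrix f g + J :=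
    fun _ _ => rfl
  have hsum := det_add_ones_add_det_neg_transpose_add_ones (by simpa using hm)
    ((toeplitz (m + 1) s).submatrix Fin.castSucc Fin.succ)
  have hdiag := det_add_ones_of_transpose_eq_neg (toeplitz_transpose_eq_neg hs (m := m))
    (by simpa using hm)
  rw [johnsonDefect, hsub, hsub, hsub, toeplitz_submatrix_succ_castSucc_eq_neg_transpose hs,
    toeplitz_submatrix_castSucc_castSucc, hdiag]
  linear_combination hsum

end SkewToeplitz

section Tridiagonal

variable {α : Type*} [CommRing α] {t : ℤ → α}

theorem det_toeplitz_submatrix_castSucc_succ_eq_one {m : ℕ} (h1 : t 1 = 1)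
    (hzero : ∀ k, 1 < k → t k = 0) :
    ((toeplitz (m + 1) t).submatrix Fin.castSucc Fin.succ).det = 1 := by
  rw [det_of_isLowerTriangular]
  · simp [h1]
  · intro i j hij
    simp only [submatrix_apply, toeplitz_apply, Fin.val_succ, Fin.val_castSucc]
    exact hzero _ (by simp [OrderDual.toDual_lt_toDual] at hij; omega)

theorem det_toeplitz_eq_one_of_even (h1 : t 1 = 1) (hneg1 : t (-1) = -1)
    (hzero : ∀ k, k ≠ 1 → k ≠ -1 → t k = 0) {N : ℕ} (hN : Even N) : (toeplitz N t).det = 1 := by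
  obtain ⟨k, rfl⟩ := hN
  rw [← two_mul]
  induction k with
  | zero => exact det_fin_zero
  | succ k ih =>
    set T := toeplitz (2 * k + 1 + 1) t
    set U := T.submatrix (Fin.succAbove 1) Fin.succ
    have hU : U.submatrix Fin.succ Fin.succ = toeplitz (2 * k) t := by
      rw [submatrix_submatrix]
      simpa using toeplitz_submatrix t 0 (f := Fin.succAbove 1 ∘ Fin.succ)
        (g := Fin.succ ∘ Fin.succ) (fun i j => by simp)
    have hdetU : U.det = 1 := by
      rw [det_succ_row_zero, Fintype.sum_eq_single 0]
      · simpa [U, T, h1, hU] using ih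
      · intro j hj
        have : (j : ℕ) ≠ 0 := fun h => hj (Fin.ext h)
        simp [U, T, hzero ((j : ℤ) + 1) (by omega) (by omega)]
    show T.det = 1
    rw [det_succ_column_zero, Fintype.sum_eq_single 1]
    · simpa [T, hneg1] using hdetU
    · intro i hi
      have : (i : ℕ) ≠ 1 := fun h => hi (Fin.ext h)
      simp [T, hzero (-(i : ℤ)) (by omega) (by omega)]

end Tridiagonal

section Generic

open MvPolynomial

noncomputable def genericOdd : ℤ → MvPolynomial ℤ ℤ := fun k => X k - X (-k)

theorem genericOdd_neg (k : ℤ) : genericOdd (-k) = -genericOdd k := by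
  simp [genericOdd]

theorem eval_single_one_genericOdd_eq_zero {k : ℤ} (hk : k ≠ 1) (hk' : k ≠ -1) :
    eval (Pi.single 1 1) (genericOdd k) = 0 := by
  simp [genericOdd, hk, show -k ≠ 1 by omega]

theorem det_toeplitz_genericOdd_ne_zero {N : ℕ} (hN : Even N) :
    (toeplitz N genericOdd).det ≠ 0 := by
  intro h
  have := congrArg (eval (Pi.single 1 1)) h
  rw [RingHom.map_det, map_zero] at this
  exact one_ne_zero <| (det_toeplitz_eq_one_of_even (by simp [genericOdd]) (by simp [genericOdd])
    (fun _ => eval_single_one_genericOdd_eq_zero) hN).symm.trans this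

theorem det_toeplitz_genericOdd_submatrix_castSucc_succ_add_ne_zero {m : ℕ} (hm : Even m) :
    ((toeplitz (m + 1) genericOdd).submatrix Fin.castSucc Fin.succ).det
      + (toeplitz m genericOdd).det ≠ 0 := by
  intro h
  have := congrArg (eval (Pi.single 1 1)) h
  rw [map_add, RingHom.map_det, RingHom.map_det, map_zero] at this
  change ((toeplitz (m + 1) fun k => eval (Pi.single 1 1) (genericOdd k)).submatrix
      Fin.castSucc Fin.succ).det + (toeplitz m fun k => eval (Pi.single 1 1) (genericOdd k)).det
    = 0 at this
  rw [det_toeplitz_submatrix_castSucc_succ_eq_one (by simp [genericOdd])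
      (fun _ hk => eval_single_one_genericOdd_eq_zero (by omega) (by omega)),
    det_toeplitz_eq_one_of_even (by simp [genericOdd]) (by simp [genericOdd])
      (fun _ => eval_single_one_genericOdd_eq_zero) hm] at this
  norm_num at this

theorem johnsonDefect_toeplitz_genericOdd_add_ones (m : ℕ) :
    (toeplitz (m + 1) genericOdd + J).johnsonDefect = 0 := by
  rcases Nat.even_or_odd m with hm | hm
  · have hdiff : ((toeplitz (m + 1) genericOdd).submatrix Fin.castSucc Fin.succ).det
        - (toeplitz m genericOdd).det = 0 := by
      refine (mul_eq_zero.mp ?_).resolve_right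
        (det_toeplitz_genericOdd_submatrix_castSucc_succ_add_ne_zero hm)
      linear_combination sq_det_toeplitz_submatrix_castSucc_succ genericOdd_neg hm
    rw [johnsonDefect_toeplitz_add_ones genericOdd_neg hm, hdiff, mul_zero]
  · exact (mul_eq_zero.mp (det_toeplitz_mul_johnsonDefect_eq_zero genericOdd_neg hm)).resolve_left
      (det_toeplitz_genericOdd_ne_zero hm.add_one)

theorem johnsonDefect_toeplitz_add_ones_eq_zero {α : Type*} [CommRing α] {s : ℤ → α}
    (hs : ∀ k, s (-k) = -s k) (hs0 : s 0 = 0) (m : ℕ) :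
    (toeplitz (m + 1) s + J).johnsonDefect = 0 := by
  set φ := eval₂Hom (Int.castRingHom α) fun k => if 0 < k then s k else 0
  have hφ : (fun k => φ (genericOdd k)) = s := by
    ext k
    rcases lt_trichotomy k 0 with hk | rfl | hk
    · simp [φ, genericOdd, hk.not_gt, hk, hs]
    · simp [φ, genericOdd, hs0]
    · simp [φ, genericOdd, hk, show ¬ k < 0 by omega]
  have hmap : φ.mapMatrix (toeplitz (m + 1) genericOdd + J) = toeplitz (m + 1) s + J := by
    rw [← hφ]; ext i j; simp
  rw [← hmap, ← RingHom.map_johnsonDefect, johnsonDefect_toeplitz_genericOdd_add_ones, map_zero]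

end Generic

end Matrix

open Matrix

/-- Johnson's conjecture, stated for matrices of size `n + 2 ≥ 2`. -/
theorem stmt_6 (n : ℕ) (A : Matrix (Fin (n + 2)) (Fin (n + 2)) ℝ)
    (hToeplitz : ∀ i j i' j' : Fin (n + 2),
      (i : ℕ) + (j' : ℕ) = (i' : ℕ) + (j : ℕ) → A i j = A i' j')
    (hsym : A + Aᵀ = (2 : ℝ) • Matrix.of (fun _ _ => (1 : ℝ))) :
    (A.submatrix Fin.castSucc Fin.succ).det + (A.submatrix Fin.succ Fin.castSucc).det =
      2 * (A.submatrix Fin.castSucc Fin.castSucc).det := by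
  obtain ⟨a, rfl⟩ := exists_eq_toeplitz hToeplitz
  have hsum : ∀ i j : Fin (n + 2), a ((j : ℤ) - i) + a ((i : ℤ) - j) = 2 := fun i j => by
    simpa using congrFun (congrFun hsym i) j
  set s : ℤ → ℝ := fun k => (a k - a (-k)) / 2
  have hA : toeplitz (n + 2) a = toeplitz (n + 2) s + Matrix.of fun _ _ => 1 := by
    ext i j
    simp only [s, Matrix.add_apply, toeplitz_apply, of_apply, neg_sub]
    linarith [hsum i j]
  have := johnsonDefect_toeplitz_add_ones_eq_zero (s := s)
    (fun k => by simp only [s, neg_neg]; ring) (by simp [s]) (n + 1)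
  rw [hA]
  exact sub_eq_zero.mp this
end

section
/- Let B be an n×n real skew-symmetric Toeplitz matrix with n even, let m = n−1, and define K = B_m(1,1) and C = B_m(1,2). Then 1ᵀ·adj(K)·1 = 1ᵀ·adj(C)·1, where 1 is the all-ones vector in ℝ^m. -/
/-!
Let `B` be invertible with inverse `G`. Cramer's rule, followed by a Laplace expansion along the
deleted column, turns `1ᵀ adj(B with row r and column c deleted) 1` into
`(-1)^(r+c) det B (G c r · 1ᵀG1 - (G1) c · (1ᵀG) r)`. If `B` is skew-symmetric, so is `G`, and
this becomes `(-1)^(r+c) det B (G1) r (G1) c`. A skew-symmetric Toeplitz matrix also satisfies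
`JBJ = -B` for the reversal `J`, hence so does `G`, and `(G1) 0 = -(G1) n`. For `n` odd the minors
`(r, c) = (n, n)` and `(n, 0)` therefore both give `det B ((G1) n)^2`.

The singular case follows by continuity along `B + t T`, where `T` is skew-symmetric, satisfies
`JTJ = -T` and `T² = -1`: then `B + t T = T (t - T B)`, so `det (B + t T)` is `det T` times a
characteristic polynomial in `t` and vanishes for only finitely many `t`.
-/

open Matrix

namespace Matrix

variable {n R : Type*} [Fintype n] [CommRing R]

section Skew

variable {A : Matrix n n R}

theorem vecMul_eq_neg_mulVec (h : Aᵀ = -A) (x : n → R) : x ᵥ* A = -(A *ᵥ x) := by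
  rw [← mulVec_transpose, h, neg_mulVec]

theorem dotProduct_mulVec_self_eq_zero_s8 [NoZeroDivisors R] [CharZero R] (h : Aᵀ = -A)
    (x : n → R) : x ⬝ᵥ (A *ᵥ x) = 0 := by
  rw [← CharZero.eq_neg_self_iff]
  conv_lhs => rw [dotProduct_mulVec, vecMul_eq_neg_mulVec h, neg_dotProduct, dotProduct_comm]

variable [DecidableEq n]

theorem inv_neg_of_isUnit_det (hA : IsUnit A.det) : (-A)⁻¹ = -A⁻¹ :=
  inv_eq_left_inv (by rw [neg_mul_neg, nonsing_inv_mul A hA])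

theorem transpose_inv_eq_neg (hA : IsUnit A.det) (h : Aᵀ = -A) : A⁻¹ᵀ = -A⁻¹ := by
  rw [transpose_nonsing_inv, h, inv_neg_of_isUnit_det hA]

theorem submatrix_inv_eq_neg (hA : IsUnit A.det) (e : n ≃ n) (h : A.submatrix e e = -A) :
    A⁻¹.submatrix e e = -A⁻¹ := by
  rw [← inv_submatrix_equiv, h, inv_neg_of_isUnit_det hA]

end Skew

section Cramer

variable [DecidableEq n]

theorem dotProduct_adjugate_mulVec (A : Matrix n n R) (u v : n → R) :
    u ⬝ᵥ (A.adjugate *ᵥ v) = ∑ j, u j * (A.updateCol j v).det := by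
  simp only [← cramer_eq_adjugate_mulVec, dotProduct, cramer_apply]

theorem det_one_updateCol_updateCol {a b : n} (hab : a ≠ b) (u v : n → R) :
    (((1 : Matrix n n R).updateCol a u).updateCol b v).det = u a * v b - u b * v a := by
  -- a rank-two perturbation `1 + P * Q` of the identity, and `det (1 + P * Q) = det (1 + Q * P)`
  let P : Matrix n (Fin 2) R :=
    of fun i => ![(u - Pi.single a 1 : n → R) i, (v - Pi.single b 1 : n → R) i]
  let Q : Matrix (Fin 2) n R := of ![Pi.single a 1, Pi.single b 1]
  have hPQ : ((1 : Matrix n n R).updateCol a u).updateCol b v = 1 + P * Q := by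
    ext i j
    rcases eq_or_ne j b with rfl | hjb
    · simp [P, Q, mul_apply, Fin.sum_univ_two, hab, one_apply, Pi.single_apply]
    rcases eq_or_ne j a with rfl | hja
    · simp [P, Q, mul_apply, Fin.sum_univ_two, hjb, one_apply, Pi.single_apply]
    · simp [P, Q, mul_apply, Fin.sum_univ_two, hjb, hja, one_apply, Pi.single_apply]
  rw [hPQ, det_one_add_mul_comm, det_fin_two]
  simp [P, Q, Pi.single_apply, hab, hab.symm]
  ring

theorem det_updateCol_mulVec_updateCol_mulVec (B : Matrix n n R) {a b : n} (hab : a ≠ b)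
    (u v : n → R) :
    ((B.updateCol a (B *ᵥ u)).updateCol b (B *ᵥ v)).det = B.det * (u a * v b - u b * v a) := by
  rw [← det_one_updateCol_updateCol hab, ← det_mul, mul_updateCol, mul_updateCol, mul_one]

end Cramer

section Minors

variable {k : ℕ}

theorem det_updateCol_single (M : Matrix (Fin (k + 1)) (Fin (k + 1)) R) (r c : Fin (k + 1)) :
    (M.updateCol c (Pi.single r 1)).det =
      (-1) ^ (c + r : ℕ) * (M.submatrix r.succAbove c.succAbove).det := by
  rw [← det_transpose, ← updateRow_transpose, ← adjugate_apply,
    adjugate_fin_succ_eq_det_submatrix, ← transpose_submatrix, det_transpose]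

theorem det_updateCol_submatrix_succAbove (M : Matrix (Fin (k + 1)) (Fin (k + 1)) R)
    (r c : Fin (k + 1)) (j : Fin k) (w : Fin (k + 1) → R) :
    ((M.submatrix r.succAbove c.succAbove).updateCol j (w ∘ r.succAbove)).det =
      (-1) ^ (c + r : ℕ) * ((M.updateCol (c.succAbove j) w).updateCol c (Pi.single r 1)).det := by
  have hminor : (M.updateCol (c.succAbove j) w).submatrix r.succAbove c.succAbove =
      (M.submatrix r.succAbove c.succAbove).updateCol j (w ∘ r.succAbove) := by
    ext i j'
    simp [updateCol_apply]
  rw [det_updateCol_single, ← mul_assoc, ← pow_add, Even.neg_one_pow ⟨_, rfl⟩, one_mul,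
    hminor]

theorem dotProduct_adjugate_submatrix_succAbove (B : Matrix (Fin (k + 1)) (Fin (k + 1)) R)
    (hB : IsUnit B.det) (r c : Fin (k + 1)) (u v : Fin (k + 1) → R) :
    (u ∘ c.succAbove) ⬝ᵥ
        ((B.submatrix r.succAbove c.succAbove).adjugate *ᵥ (v ∘ r.succAbove)) =
      (-1) ^ (c + r : ℕ) * B.det *
        (B⁻¹ c r * (u ⬝ᵥ (B⁻¹ *ᵥ v)) - (B⁻¹ *ᵥ v) c * (u ᵥ* B⁻¹) r) := by
  set x := B⁻¹ *ᵥ v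
  set y := B⁻¹ *ᵥ Pi.single r 1
  have hx : B *ᵥ x = v := by rw [mulVec_mulVec, mul_nonsing_inv B hB, one_mulVec]
  have hy : B *ᵥ y = Pi.single r 1 := by rw [mulVec_mulVec, mul_nonsing_inv B hB, one_mulVec]
  have hterm (j : Fin k) :
      ((B.submatrix r.succAbove c.succAbove).updateCol j (v ∘ r.succAbove)).det =
        (-1) ^ (c + r : ℕ) * B.det * (x (c.succAbove j) * y c - x c * y (c.succAbove j)) := by
    rw [det_updateCol_submatrix_succAbove, ← hx, ← hy,
      det_updateCol_mulVec_updateCol_mulVec _ (Fin.succAbove_ne c j), mul_assoc]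
  -- the omitted index `c` would contribute `x c * y c - x c * y c = 0`
  have hsum :
      ∑ j : Fin k, u (c.succAbove j) * (x (c.succAbove j) * y c - x c * y (c.succAbove j)) =
        y c * (u ⬝ᵥ x) - x c * (u ⬝ᵥ y) := by
    have := Fin.sum_univ_succAbove (fun i => u i * (x i * y c - x c * y i)) c
    simp only [sub_self, mul_zero, zero_add] at this
    rw [← this, dotProduct, dotProduct, Finset.mul_sum, Finset.mul_sum,
      ← Finset.sum_sub_distrib]
    exact Finset.sum_congr rfl fun i _ => by ring
  have hyc : y c = B⁻¹ c r := by simp [y, mulVec_single]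
  have huy : u ⬝ᵥ y = (u ᵥ* B⁻¹) r := by rw [dotProduct_mulVec, dotProduct_single, mul_one]
  simp only [dotProduct_adjugate_mulVec, Function.comp_apply, hterm]
  rw [← hyc, ← huy, ← hsum, Finset.mul_sum]
  exact Finset.sum_congr rfl fun j _ => by ring

theorem dotProduct_adjugate_submatrix_succAbove_of_transpose_eq_neg [NoZeroDivisors R]
    [CharZero R] {B : Matrix (Fin (k + 1)) (Fin (k + 1)) R} (hB : IsUnit B.det)
    (hskew : Bᵀ = -B) (r c : Fin (k + 1)) (x : Fin (k + 1) → R) :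
    (x ∘ c.succAbove) ⬝ᵥ
        ((B.submatrix r.succAbove c.succAbove).adjugate *ᵥ (x ∘ r.succAbove)) =
      (-1) ^ (c + r : ℕ) * B.det * ((B⁻¹ *ᵥ x) c * (B⁻¹ *ᵥ x) r) := by
  have hskew' := transpose_inv_eq_neg hB hskew
  rw [dotProduct_adjugate_submatrix_succAbove B hB, dotProduct_mulVec_self_eq_zero_s8 hskew',
    vecMul_eq_neg_mulVec hskew']
  simp only [mul_zero, zero_sub, Pi.neg_apply, mul_neg, neg_neg]

theorem ones_dotProduct_adjugate_castSucc_eq_succ [NoZeroDivisors R] [CharZero R]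
    (hk : Odd k) {B : Matrix (Fin (k + 1)) (Fin (k + 1)) R} (hB : IsUnit B.det)
    (hskew : Bᵀ = -B) (hrev : B.submatrix Fin.rev Fin.rev = -B) :
    1 ⬝ᵥ ((B.submatrix Fin.castSucc Fin.castSucc).adjugate *ᵥ 1) =
      (1 : Fin k → R) ⬝ᵥ ((B.submatrix Fin.castSucc Fin.succ).adjugate *ᵥ 1) := by
  set g := B⁻¹ *ᵥ 1
  have hg : g 0 = -g (Fin.last k) := by
    have := congrArg (· *ᵥ (1 : Fin (k + 1) → R)) (submatrix_inv_eq_neg hB Fin.revPerm hrev)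
    simpa [submatrix_mulVec_equiv, Pi.one_comp, neg_mulVec] using congrFun this (Fin.last k)
  have hminor (c : Fin (k + 1)) :
      1 ⬝ᵥ ((B.submatrix (Fin.last k).succAbove c.succAbove).adjugate *ᵥ 1) =
        (-1) ^ (c + k : ℕ) * B.det * (g c * g (Fin.last k)) :=
    dotProduct_adjugate_submatrix_succAbove_of_transpose_eq_neg hB hskew (Fin.last k) c 1
  rw [← Fin.succAbove_last, ← Fin.succAbove_zero, hminor, hminor, hg, Fin.val_last,
    Even.neg_one_pow ⟨k, rfl⟩, Fin.val_zero, zero_add, hk.neg_one_pow]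
  ring

end Minors

section Density

variable [DecidableEq n] {𝕜 : Type*} [NontriviallyNormedField 𝕜] [CompleteSpace 𝕜]

theorem dense_setOf_isUnit_det_add_smul (B T : Matrix n n 𝕜) (hT : T * T = -1) :
    Dense {t : 𝕜 | IsUnit (B + t • T).det} := by
  have hTdet : IsUnit T.det := by
    refine isUnit_of_mul_isUnit_left (y := T.det) ?_
    rw [← det_mul, hT, det_neg, det_one, mul_one]
    exact isUnit_neg_one.pow _
  refine (Polynomial.finite_setOfPred_isRoot (T * B).charpoly_monic.ne_zero).countable.dense_compl
    𝕜 |>.mono fun t ht => ?_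
  have hfactor : T * (scalar n t - T * B) = B + t • T := by
    rw [mul_sub, ← mul_assoc, hT, scalar_apply, ← smul_one_eq_diagonal, Matrix.mul_smul,
      mul_one, neg_one_mul, sub_neg_eq_add, add_comm]
  rw [Set.mem_ofPred_eq, ← hfactor, det_mul, ← eval_charpoly]
  exact hTdet.mul (isUnit_iff_ne_zero.mpr ht)

theorem eq_of_forall_isUnit_det_add_smul {X : Type*} [TopologicalSpace X] [T2Space X]
    {F G : Matrix n n 𝕜 → X} (hF : Continuous F) (hG : Continuous G) {T : Matrix n n 𝕜}
    (hT : T * T = -1) (B : Matrix n n 𝕜)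
    (h : ∀ t : 𝕜, IsUnit (B + t • T).det → F (B + t • T) = G (B + t • T)) :
    F B = G B := by
  have hline : Continuous fun t : 𝕜 => B + t • T := by fun_prop
  simpa using congrFun ((hF.comp hline).ext_on (dense_setOf_isUnit_det_add_smul B T hT)
    (hG.comp hline) h) 0

end Density

section Reversal

variable {α : Type*} {N : ℕ}

theorem submatrix_rev_eq_transpose_of_toeplitz (B : Matrix (Fin N) (Fin N) α)
    (h : ∀ i j i' j' : Fin N, (i : ℕ) + j' = i' + j → B i j = B i' j') :
    B.submatrix Fin.rev Fin.rev = Bᵀ := by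
  ext i j
  refine h _ _ _ _ ?_
  simp only [Fin.val_rev]
  omega

-- for `N = m + m` this is the block matrix `!![0, 1; -1, 0]`
def skewShift (N m : ℕ) : Matrix (Fin N) (Fin N) R :=
  of fun i j => if (j : ℕ) = i + m then 1 else if (i : ℕ) = j + m then -1 else 0

variable {m : ℕ}

theorem skewShift_transpose (hN : N = m + m) :
    (skewShift N m : Matrix (Fin N) (Fin N) R)ᵀ = -skewShift N m := by
  ext i j
  have := i.isLt
  simp only [transpose_apply, neg_apply, skewShift, of_apply]
  split_ifs <;> first | omega | simp

theorem skewShift_submatrix_rev (hN : N = m + m) :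
    (skewShift N m : Matrix (Fin N) (Fin N) R).submatrix Fin.rev Fin.rev = -skewShift N m := by
  ext i j
  simp only [submatrix_apply, neg_apply, skewShift, of_apply, Fin.val_rev]
  split_ifs <;> first | omega | simp

theorem skewShift_mul_self (hN : N = m + m) :
    (skewShift N m : Matrix (Fin N) (Fin N) R) * skewShift N m = -1 := by
  ext i k
  let i' : Fin N := ⟨if (i : ℕ) < m then i + m else i - m, by split_ifs <;> omega⟩
  rw [mul_apply, Fintype.sum_eq_single i']
  · simp only [skewShift, of_apply, neg_apply, one_apply, i', Fin.ext_iff]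
    split_ifs <;> first | omega | simp
  · intro j hj
    simp only [skewShift, of_apply, i', ne_eq, Fin.ext_iff] at hj ⊢
    split_ifs at hj ⊢ <;> first | omega | simp

end Reversal

end Matrix

theorem stmt_8 (n : ℕ) (hn : Even (n + 1)) (B : Matrix (Fin (n + 1)) (Fin (n + 1)) ℝ)
    (hskew : Bᵀ = -B)
    (hToeplitz : ∀ i j i' j' : Fin (n + 1),
      (i : ℕ) + (j' : ℕ) = (i' : ℕ) + (j : ℕ) → B i j = B i' j') :
    dotProduct (fun _ => (1 : ℝ))
        ((B.submatrix Fin.castSucc Fin.castSucc).adjugate.mulVec (fun _ => (1 : ℝ))) =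
      dotProduct (fun _ => (1 : ℝ))
        ((B.submatrix Fin.castSucc Fin.succ).adjugate.mulVec (fun _ => (1 : ℝ))) := by
  obtain ⟨m, hm⟩ := hn
  have hodd : Odd n := ⟨m - 1, by omega⟩
  have hrev : B.submatrix Fin.rev Fin.rev = -B := by
    rw [submatrix_rev_eq_transpose_of_toeplitz B hToeplitz, hskew]
  refine eq_of_forall_isUnit_det_add_smul
    (F := fun A => 1 ⬝ᵥ ((A.submatrix Fin.castSucc Fin.castSucc).adjugate *ᵥ 1))
    (G := fun A => 1 ⬝ᵥ ((A.submatrix Fin.castSucc Fin.succ).adjugate *ᵥ 1))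
    (by fun_prop) (by fun_prop) (skewShift_mul_self hm) B fun t ht => ?_
  refine ones_dotProduct_adjugate_castSucc_eq_succ hodd ht ?_ ?_
  · rw [transpose_add, transpose_smul, hskew, skewShift_transpose hm, smul_neg, neg_add]
  · change B.submatrix Fin.rev Fin.rev + t • (skewShift (n + 1) m).submatrix Fin.rev Fin.rev = _
    rw [hrev, skewShift_submatrix_rev hm, smul_neg, neg_add]
end

section
/- Let m be odd and let K be the m×m tridiagonal matrix with 1 on the superdiagonal and −1 on the subdiagonal. Then adj(K) = u·uᵀ, where u = (1,0,1,0,…,1)ᵀ, and consequently 1ᵀ·adj(K)·1 = ((m+1)/2)². -/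
/-!
Laplace expansion gives `det K_{m+2} = det K_m`, so `K_m` is singular for odd `m` and
`K * adj K = adj K * K = 0`. Hence every column of `adj K` lies in `ker K`, and so does every row,
because `Kᵀ = -K`. The equations `K v = 0` read `v₁ = 0` and `v_{k+2} = v_k`, so `ker K` is spanned
by `u`, and `adj K = c • u uᵀ` with `c = adj(K)₀₀ = det K_{m-1} = 1`.
-/

open Matrix

variable (R : Type*)

def skewTridiag [Zero R] [One R] [Neg R] (n : ℕ) : Matrix (Fin n) (Fin n) R :=
  Matrix.of fun i j => if (j : ℕ) = i + 1 then 1 else if (i : ℕ) = j + 1 then -1 else 0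

/-- The paper's `u`: indices are `0`-based here, so its odd positions are the even indices. -/
def evenIndicator [Zero R] [One R] (n : ℕ) : Fin n → R :=
  fun i => if (i : ℕ) % 2 = 0 then 1 else 0

section Ring
variable {R} [Ring R] {n : ℕ}

theorem skewTridiag_transpose : (skewTridiag R n)ᵀ = -skewTridiag R n := by
  ext i j
  rw [transpose_apply, neg_apply]
  simp only [skewTridiag, of_apply]
  split_ifs <;> first | omega | simp

theorem skewTridiag_submatrix_succ :
    (skewTridiag R (n + 1)).submatrix Fin.succ Fin.succ = skewTridiag R n := by
  ext i j
  simp [skewTridiag]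

theorem skewTridiag_mulVec_apply_zero (v : Fin n → R) (h : 1 < n) :
    (skewTridiag R n *ᵥ v) ⟨0, by omega⟩ = v ⟨1, h⟩ := by
  rw [mulVec, dotProduct, Fintype.sum_eq_single ⟨1, h⟩ fun j hj => ?_]
  · simp [skewTridiag]
  · have : (j : ℕ) ≠ 1 := fun h' => hj (Fin.ext h')
    simp [skewTridiag, this]

theorem skewTridiag_mulVec_apply_succ (v : Fin n → R) (k : ℕ) (h : k + 2 < n) :
    (skewTridiag R n *ᵥ v) ⟨k + 1, by omega⟩ = v ⟨k + 2, h⟩ - v ⟨k, by omega⟩ := by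
  rw [mulVec, dotProduct, Fintype.sum_eq_add ⟨k + 2, h⟩ ⟨k, by omega⟩ (by simp [Fin.ext_iff])
    fun j hj => ?_]
  · simp [skewTridiag, sub_eq_add_neg, show k ≠ k + 2 by omega]
  · have h1 : (j : ℕ) ≠ k + 2 := fun h' => hj.1 (Fin.ext h')
    have h2 : (j : ℕ) ≠ k := fun h' => hj.2 (Fin.ext h')
    simp [skewTridiag, h1]
    omega

theorem eq_smul_evenIndicator_of_skewTridiag_mulVec_eq_zero {v : Fin (n + 1) → R}
    (hv : skewTridiag R (n + 1) *ᵥ v = 0) : v = v 0 • evenIndicator R (n + 1) := by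
  suffices ∀ k (hk : k < n + 1), v ⟨k, hk⟩ = v 0 * if k % 2 = 0 then 1 else 0 from
    funext fun i => this i i.2
  intro k
  induction k using Nat.twoStepInduction with
  | zero => simp
  | one =>
    intro hk
    simpa using (skewTridiag_mulVec_apply_zero v hk).symm.trans (congrFun hv _)
  | more k ih _ =>
    intro hk
    have := (skewTridiag_mulVec_apply_succ v k hk).symm.trans (congrFun hv _)
    rw [sub_eq_zero.mp this, ih (by omega), Nat.add_mod_right]

end Ring

section CommRing
variable {R} [CommRing R]

theorem det_skewTridiag_add_two (n : ℕ) :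
    (skewTridiag R (n + 2)).det = (skewTridiag R n).det := by
  rw [det_succ_row_zero, Fintype.sum_eq_single 1 fun j hj => ?_]
  · rw [det_succ_column_zero, Fintype.sum_eq_single 0 fun i hi => ?_]
    · have : ((skewTridiag R (n + 2)).submatrix Fin.succ (Fin.succAbove 1)).submatrix
          (Fin.succAbove 0) Fin.succ = skewTridiag R n := by
        ext i j
        simp [skewTridiag, Fin.succAbove]
      rw [this]
      simp [skewTridiag]
    · have : (i : ℕ) ≠ 0 := Fin.val_ne_of_ne hi
      simp [skewTridiag, Fin.succAbove, this]
  · have : (j : ℕ) ≠ 1 := Fin.val_ne_of_ne hj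
    simp [skewTridiag, this]

theorem det_skewTridiag (n : ℕ) : (skewTridiag R n).det = if Even n then 1 else 0 := by
  induction n using Nat.twoStepInduction with
  | zero => simp
  | one => simp [skewTridiag]
  | more n ih _ => simp [det_skewTridiag_add_two, ih, Nat.even_add_one]

theorem adjugate_skewTridiag {m : ℕ} (hm : Odd m) :
    (skewTridiag R m).adjugate = vecMulVec (evenIndicator R m) (evenIndicator R m) := by
  obtain ⟨n, rfl⟩ := hm
  set K := skewTridiag R (2 * n + 1)
  have hdet : K.det = 0 := by simp [K, det_skewTridiag]
  have hcol (j) : K *ᵥ K.adjugate.col j = 0 := by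
    rw [← mulVec_single_one, mulVec_mulVec, mul_adjugate, hdet, zero_smul, zero_mulVec]
  have hrow : K *ᵥ K.adjugate.row 0 = 0 := by
    rw [← neg_eq_zero, ← neg_mulVec, ← skewTridiag_transpose, mulVec_transpose,
      ← single_one_vecMul, vecMul_vecMul, adjugate_mul, hdet, zero_smul, vecMul_zero]
  have h00 : K.adjugate 0 0 = 1 := by
    rw [adjugate_fin_succ_eq_det_submatrix]
    simp [K, Fin.succAbove_zero, skewTridiag_submatrix_succ, det_skewTridiag]
  ext i j
  have hi := congrFun (eq_smul_evenIndicator_of_skewTridiag_mulVec_eq_zero (hcol j)) i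
  have hj := congrFun (eq_smul_evenIndicator_of_skewTridiag_mulVec_eq_zero hrow) j
  simp only [col_apply, row_apply, Pi.smul_apply, smul_eq_mul] at hi hj
  rw [hi, hj, h00, one_mul, vecMulVec_apply, mul_comm]

end CommRing

theorem sum_evenIndicator {R : Type*} [AddCommMonoidWithOne R] (n : ℕ) :
    ∑ i, evenIndicator R (2 * n + 1) i = n + 1 := by
  simp only [evenIndicator]
  rw [Fin.sum_univ_eq_sum_range (fun i => if i % 2 = 0 then (1 : R) else 0)]
  induction n with
  | zero => rw [Finset.sum_range_one]; simp
  | succ n ih =>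
    rw [show 2 * (n + 1) + 1 = 2 * n + 1 + 1 + 1 by ring, Finset.sum_range_succ,
      Finset.sum_range_succ, ih]
    simp [Nat.add_mod, add_assoc]

theorem stmt_11 (m : ℕ) (hm : Odd m)
    (K : Matrix (Fin m) (Fin m) ℝ)
    (hK : ∀ i j : Fin m, K i j =
      if (j : ℕ) = (i : ℕ) + 1 then 1 else if (i : ℕ) = (j : ℕ) + 1 then -1 else 0)
    (u : Fin m → ℝ) (hu : ∀ i : Fin m, u i = if (i : ℕ) % 2 = 0 then 1 else 0) :
    K.adjugate = Matrix.of (fun i j => u i * u j) ∧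
      dotProduct (fun _ => (1 : ℝ)) (K.adjugate.mulVec (fun _ => (1 : ℝ))) =
        (((m : ℝ) + 1) / 2) ^ 2 := by
  obtain rfl : K = skewTridiag ℝ m := Matrix.ext hK
  obtain rfl : u = evenIndicator ℝ m := funext hu
  have hadj := adjugate_skewTridiag (R := ℝ) hm
  refine ⟨hadj, ?_⟩
  obtain ⟨n, rfl⟩ := hm
  have hsum := sum_evenIndicator (R := ℝ) n
  rw [hadj, dotProduct_mulVec, vecMul_vecMulVec, smul_dotProduct, smul_eq_mul]
  simp only [dotProduct, one_mul, mul_one, hsum]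
  push_cast
  ring
end

section
/- Let A be an n×n real matrix satisfying A + Aᵀ = α·w·wᵀ for some α ∈ ℝ and nonzero w ∈ ℝ^n. Then √(det A_{n-1}(1,1) · det A_{n-1}(2,2)) = |(det A_{n-1}(1,2) + det A_{n-1}(2,1))/2|. -/
/-!
For invertible `A`, `det A • (adj A + (adj A)ᵀ) = adj A * (A + Aᵀ) * adj Aᵀ = α • v vᵀ`
with `v = adj A *ᵥ w`, so the symmetric part `S` of `adj A` has rank at most one and
`S i i * S j j = S i j ^ 2`. At the corners `0` and `n` of `Fin (n + 1)` the entries of `adj A`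
are the four minors of the statement, up to the sign `(-1) ^ n`.

Singular `A = K + a • w wᵀ` (`K` skew) are reached by a polynomial path
`t ↦ K(t) + a(t) • w(t) w(t)ᵀ` of the same shape ending at an invertible matrix, namely the
symplectic block `[[0, 1], [-1, 0]]`, bordered by a `1` in odd size. Over the domain `R[X]` the
determinant of the path is nonzero, so the identity holds there and specializes at `t = 0`.
-/

open Matrix Polynomial

namespace Matrix

variable {l m R : Type*} [CommRing R]

theorem add_transpose_of_eq_skew_add {A K : Matrix m m R} {a : R} {w : m → R} (hK : Kᵀ = -K)
    (hA : A = K + a • vecMulVec w w) : A + Aᵀ = (2 * a) • vecMulVec w w := by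
  rw [hA, transpose_add, transpose_smul, transpose_vecMulVec, hK]
  module

variable [Fintype m]

theorem mul_vecMulVec_mul_transpose (B : Matrix l m R) (x : m → R) :
    B * vecMulVec x x * Bᵀ = vecMulVec (B *ᵥ x) (B *ᵥ x) := by
  rw [mul_vecMulVec, vecMulVec_mul, vecMul_transpose]

variable [DecidableEq m]

theorem isUnit_det_fromBlocks_zero_one_neg_one_zero (ι : Type*) [Fintype ι] [DecidableEq ι] :
    IsUnit (fromBlocks 0 1 (-1) 0 : Matrix (ι ⊕ ι) (ι ⊕ ι) R).det := by
  refine isUnit_det_of_right_inverse (B := fromBlocks 0 (-1) 1 0) ?_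
  simp [fromBlocks_multiply, fromBlocks_one]

theorem exists_skew_add_smul_vecMulVec_isUnit_det_of_equiv {ι : Type*} [Fintype ι]
    [DecidableEq ι] (σ : m ≃ ι) {K : Matrix ι ι R} {b : R} {e : ι → R} (hK : Kᵀ = -K)
    (hdet : IsUnit (K + b • vecMulVec e e).det) :
    ∃ (K : Matrix m m R) (b : R) (e : m → R),
      Kᵀ = -K ∧ IsUnit (K + b • vecMulVec e e).det := by
  refine ⟨reindex σ.symm σ.symm K, b, e ∘ σ, by rw [transpose_reindex, hK]; rfl, ?_⟩
  convert (det_reindex_self σ.symm (K + b • vecMulVec e e)).symm ▸ hdet using 2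
  ext i k
  simp [vecMulVec_apply]

theorem exists_skew_add_smul_vecMulVec_isUnit_det :
    ∃ (K : Matrix m m R) (b : R) (e : m → R),
      Kᵀ = -K ∧ IsUnit (K + b • vecMulVec e e).det := by
  obtain ⟨j, hj | hj⟩ := Nat.even_or_odd' (Fintype.card m)
  · refine exists_skew_add_smul_vecMulVec_isUnit_det_of_equiv
      (Fintype.equivOfCardEq (β := Fin j ⊕ Fin j) (by simp [hj, two_mul]))
      (K := fromBlocks 0 1 (-1) 0) (b := 0) (e := 0)
      (by simp [fromBlocks_transpose, fromBlocks_neg]) ?_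
    simpa using isUnit_det_fromBlocks_zero_one_neg_one_zero (R := R) (Fin j)
  · refine exists_skew_add_smul_vecMulVec_isUnit_det_of_equiv
      (Fintype.equivOfCardEq (β := (Fin j ⊕ Fin j) ⊕ Unit) (by simp [hj, two_mul]))
      (K := fromBlocks (fromBlocks 0 1 (-1) 0) 0 0 0) (b := 1) (e := Sum.elim 0 1)
      (by simp [fromBlocks_transpose, fromBlocks_neg]) ?_
    rw [show _ + _ = fromBlocks (fromBlocks 0 1 (-1) 0) 0 0 (1 : Matrix Unit Unit R) by
      ext (i | i) (k | k) <;> simp [vecMulVec_apply]]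
    rw [det_fromBlocks_zero₂₁, det_one, mul_one]
    exact isUnit_det_fromBlocks_zero_one_neg_one_zero _

theorem det_smul_adjugate_add_adjugate_transpose (A : Matrix m m R) :
    A.det • (adjugate A + (adjugate A)ᵀ) = adjugate A * (A + Aᵀ) * (adjugate A)ᵀ := by
  rw [adjugate_transpose, Matrix.mul_add, Matrix.add_mul, adjugate_mul, Matrix.mul_assoc,
    mul_adjugate, det_transpose, smul_mul, Matrix.mul_smul, Matrix.one_mul, Matrix.mul_one,
    smul_add, add_comm]

theorem four_mul_adjugate_mul_adjugate_of_det_ne_zero [IsDomain R] {A : Matrix m m R} {α : R}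
    {w : m → R} (hA : A + Aᵀ = α • vecMulVec w w) (hdet : A.det ≠ 0) (i j : m) :
    4 * (adjugate A i i * adjugate A j j) = (adjugate A i j + adjugate A j i) ^ 2 := by
  set v := adjugate A *ᵥ w
  have hsymm : A.det • (adjugate A + (adjugate A)ᵀ) = α • vecMulVec v v := by
    rw [det_smul_adjugate_add_adjugate_transpose, hA, Matrix.mul_smul, Matrix.smul_mul,
      mul_vecMulVec_mul_transpose]
  have entry : ∀ k l, A.det * (adjugate A k l + adjugate A l k) = α * (v k * v l) :=
    fun k l => by simpa [vecMulVec_apply] using congr_fun₂ hsymm k l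
  refine mul_left_cancel₀ (pow_ne_zero 2 hdet) ?_
  linear_combination (A.det * (adjugate A j j + adjugate A j j)) * entry i i
    + (α * v i * v i) * entry j j
    - (A.det * (adjugate A i j + adjugate A j i) + α * (v i * v j)) * entry i j

theorem four_mul_adjugate_mul_adjugate_of_eq_skew_add [IsDomain R] {A K : Matrix m m R} {a : R}
    {w : m → R} (hK : Kᵀ = -K) (hA : A = K + a • vecMulVec w w) (i j : m) :
    4 * (adjugate A i i * adjugate A j j) = (adjugate A i j + adjugate A j i) ^ 2 := by
  obtain ⟨K₁, b, e, hK₁, hdet₁⟩ :=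
    exists_skew_add_smul_vecMulVec_isUnit_det (m := m) (R := R)
  set Kₓ : Matrix m m R[X] := K.map C + (X : R[X]) • (K₁.map C - K.map C)
  set wₓ : m → R[X] := fun k => C (w k) + X * C (e k - w k)
  set P : Matrix m m R[X] := Kₓ + (C a + X * C (b - a)) • vecMulVec wₓ wₓ
  have hKₓ : Kₓᵀ = -Kₓ := by
    simp only [Kₓ, transpose_add, transpose_smul, transpose_sub, ← transpose_map, hK, hK₁]
    rw [Matrix.map_neg _ (map_neg C), Matrix.map_neg _ (map_neg C)]
    module
  have heval₀ : (evalRingHom 0).mapMatrix P = A := by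
    ext; simp [P, Kₓ, wₓ, hA, vecMulVec_apply]
  have heval₁ : (evalRingHom 1).mapMatrix P = K₁ + b • vecMulVec e e := by
    ext; simp [P, Kₓ, wₓ, vecMulVec_apply]
  have hdetP : P.det ≠ 0 := fun h => hdet₁.ne_zero <| by
    rw [← heval₁, ← RingHom.map_det, h, map_zero]
  have hP := four_mul_adjugate_mul_adjugate_of_det_ne_zero
    (add_transpose_of_eq_skew_add (A := P) hKₓ rfl) hdetP i j
  have hadj : ∀ k l, (adjugate P k l).eval 0 = adjugate A k l := fun k l => by
    rw [← heval₀, ← RingHom.map_adjugate]; rfl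
  simpa only [eval_mul, eval_add, eval_pow, eval_ofNat, hadj] using congrArg (eval 0) hP

theorem four_mul_det_submatrix_mul_det_submatrix_of_eq_skew_add [IsDomain R] {n : ℕ}
    {A K : Matrix (Fin (n + 1)) (Fin (n + 1)) R} {a : R} {w : Fin (n + 1) → R} (hK : Kᵀ = -K)
    (hA : A = K + a • vecMulVec w w) :
    4 * ((A.submatrix Fin.castSucc Fin.castSucc).det * (A.submatrix Fin.succ Fin.succ).det) =
      ((A.submatrix Fin.castSucc Fin.succ).det + (A.submatrix Fin.succ Fin.castSucc).det) ^ 2 := by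
  have h := four_mul_adjugate_mul_adjugate_of_eq_skew_add hK hA (Fin.last n) 0
  simp only [adjugate_fin_succ_eq_det_submatrix, Fin.succAbove_zero, Fin.succAbove_last,
    Fin.val_zero, Fin.val_last, add_zero, zero_add, pow_add, pow_zero, one_mul] at h
  have hsign : ((-1 : R) ^ n) ^ 2 = 1 := by rw [← pow_mul, mul_comm, pow_mul, neg_one_sq, one_pow]
  linear_combination h - (4 * ((A.submatrix Fin.castSucc Fin.castSucc).det *
    (A.submatrix Fin.succ Fin.succ).det) - ((A.submatrix Fin.castSucc Fin.succ).det +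
      (A.submatrix Fin.succ Fin.castSucc).det) ^ 2) * hsign

end Matrix

theorem stmt_13_general (n : ℕ) (A : Matrix (Fin (n + 1)) (Fin (n + 1)) ℝ)
    (α : ℝ) (w : Fin (n + 1) → ℝ)
    (hA : A + Aᵀ = α • Matrix.of (fun i j => w i * w j)) :
    Real.sqrt ((A.submatrix Fin.castSucc Fin.castSucc).det *
        (A.submatrix Fin.succ Fin.succ).det) =
      |((A.submatrix Fin.castSucc Fin.succ).det +
          (A.submatrix Fin.succ Fin.castSucc).det) / 2| := by
  set K := A - (α / 2) • vecMulVec w w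
  have hK : Kᵀ = -K := by
    rw [transpose_sub, transpose_smul, transpose_vecMulVec, eq_neg_iff_add_eq_zero,
      show Aᵀ - (α / 2) • vecMulVec w w + K = (A + Aᵀ) - α • vecMulVec w w by module, hA]
    exact sub_self _
  have h := four_mul_det_submatrix_mul_det_submatrix_of_eq_skew_add hK (sub_add_cancel A _).symm
  rw [← Real.sqrt_sq_eq_abs, div_pow, ← h]
  congr 1
  ring

theorem stmt_13 (n : ℕ) (A : Matrix (Fin (n + 1)) (Fin (n + 1)) ℝ)
    (α : ℝ) (w : Fin (n + 1) → ℝ) (hw : w ≠ 0)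
    (hA : A + Aᵀ = α • Matrix.of (fun i j => w i * w j)) :
    Real.sqrt ((A.submatrix Fin.castSucc Fin.castSucc).det *
        (A.submatrix Fin.succ Fin.succ).det) =
      |((A.submatrix Fin.castSucc Fin.succ).det +
          (A.submatrix Fin.succ Fin.castSucc).det) / 2| :=
  stmt_13_general n A α w hA
end

section
/- (Bayat–Teimoori) Let n ≥ 2 and let A be an n×n real matrix with A + Aᵀ = α·J_n for some α ∈ ℝ. Then √(det A_{n-1}(1,1) · det A_{n-1}(2,2)) = |(det A_{n-1}(1,2) + det A_{n-1}(2,1))/2|. -/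
/-!
Write `B = adjugate A` and `J` for the all-ones matrix. From `B * A = det A • 1` one gets
`B * (A + Aᵀ) * Bᵀ = det A • (B + Bᵀ)`, while `B * J * Bᵀ = r rᵀ` with `r = B *ᵥ 1`. So when
`A + Aᵀ = t • J`, the matrix `det A • (B + Bᵀ)` is a multiple of the rank-one matrix `r rᵀ`; its
`2 × 2` principal minors vanish, which gives `(B i j + B j i) ^ 2 = 4 * B i i * B j j` as soon as
`det A` is not a zero divisor. In general, apply this to `X • N + A` over `R[X]`, with `N`
unitriangular and `N + Nᵀ = 2 • J` (so the determinant is monic), and evaluate at `X = 0`.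
At the corners `i = 0`, `j = last` the four adjugate entries are, up to a common sign, the four
corner minors of the statement.
-/

open Matrix Polynomial

section

variable {n R : Type*} [Fintype n] [DecidableEq n] [CommRing R]

theorem exists_det_eq_one_and_add_transpose_eq :
    ∃ N : Matrix n n R, N.det = 1 ∧ N + Nᵀ = (2 : R) • of fun _ _ => 1 := by
  let : LinearOrder n := LinearOrder.lift' _ (Fintype.equivFin n).injective
  refine ⟨of fun i j => if j < i then 0 else if i = j then 1 else 2, ?_, ?_⟩
  · rw [det_of_isUpperTriangular fun i j (hij : j < i) => by simp [hij]]
    simp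
  · ext i j
    rcases lt_trichotomy i j with h | rfl | h
    · simp [h, h.ne, not_lt_of_gt h]
    · norm_num
    · simp [h, h.ne, not_lt_of_gt h]

theorem det_smul_adjugate_add_transpose {A : Matrix n n R} {t : R}
    (hA : A + Aᵀ = t • of fun _ _ => 1) :
    A.det • (adjugate A + (adjugate A)ᵀ) =
      t • vecMulVec (adjugate A *ᵥ 1) (adjugate A *ᵥ 1) := by
  have hJ : (of fun _ _ => 1 : Matrix n n R) = vecMulVec 1 1 := by
    ext; simp [vecMulVec_apply]
  calc A.det • (adjugate A + (adjugate A)ᵀ)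
      = adjugate A * (A + Aᵀ) * (adjugate A)ᵀ := by
        rw [mul_add, add_mul, adjugate_mul, mul_assoc, ← transpose_mul, adjugate_mul,
          transpose_smul, transpose_one, smul_mul_assoc, one_mul, mul_smul_comm, mul_one,
          smul_add, add_comm]
    _ = t • vecMulVec (adjugate A *ᵥ 1) (adjugate A *ᵥ 1) := by
        rw [hA, hJ, mul_smul_comm, smul_mul_assoc, mul_vecMulVec, vecMulVec_mul,
          vecMul_transpose]

theorem adjugate_add_transpose_sq_of_isRegular {A : Matrix n n R} {t : R}
    (hA : A + Aᵀ = t • of fun _ _ => 1) (hdet : IsRegular A.det) (i j : n) :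
    (adjugate A i j + adjugate A j i) ^ 2 = 4 * adjugate A i i * adjugate A j j := by
  have h := congrFun₂ (det_smul_adjugate_add_transpose hA)
  simp only [Matrix.smul_apply, Matrix.add_apply, transpose_apply, vecMulVec_apply,
    smul_eq_mul] at h
  refine (hdet.pow 2).left ?_
  set r := adjugate A *ᵥ 1
  linear_combination (A.det * (adjugate A i j + adjugate A j i) + t * r i * r j) * h i j
    - t * r i * r i * h j j - A.det * (adjugate A j j + adjugate A j j) * h i i

theorem adjugate_add_transpose_sq {A : Matrix n n R} {t : R}
    (hA : A + Aᵀ = t • of fun _ _ => 1) (i j : n) :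
    (adjugate A i j + adjugate A j i) ^ 2 = 4 * adjugate A i i * adjugate A j j := by
  obtain ⟨N, hNdet, hN⟩ := exists_det_eq_one_and_add_transpose_eq (n := n) (R := R)
  set M : Matrix n n R[X] := (X : R[X]) • N.map C + A.map C
  have hM : M + Mᵀ = (2 * X + C t : R[X]) • of fun _ _ => 1 := by
    ext p q : 1
    have hNpq := congrArg (C (R := R)) (congrFun₂ hN p q)
    have hApq := congrArg (C (R := R)) (congrFun₂ hA p q)
    simp only [Matrix.add_apply, Matrix.smul_apply, transpose_apply, of_apply, smul_eq_mul,
      mul_one, map_add, map_ofNat] at hNpq hApq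
    simp only [M, Matrix.add_apply, Matrix.smul_apply, transpose_apply, map_apply, of_apply,
      smul_eq_mul, mul_one]
    linear_combination X * hNpq + hApq
  have hMdet : IsRegular M.det := by
    refine (monic_of_natDegree_le_of_coeff_eq_one _ (natDegree_det_X_add_C_le N A) ?_).isRegular
    rw [coeff_det_X_add_C_card, hNdet]
  have hMA : (evalRingHom 0).mapMatrix M = A := by
    ext p q
    simp [M]
  have hadj (p q : n) : eval 0 (adjugate M p q) = adjugate A p q := by
    rw [← hMA, ← RingHom.map_adjugate]
    rfl
  have h := congrArg (eval 0) (adjugate_add_transpose_sq_of_isRegular hM hMdet i j)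
  simpa only [eval_pow, eval_add, eval_mul, eval_ofNat, hadj] using h

end

section

variable {R : Type*} [CommRing R] {n : ℕ} (A : Matrix (Fin (n + 1)) (Fin (n + 1)) R)

theorem adjugate_zero_zero : adjugate A 0 0 = (A.submatrix Fin.succ Fin.succ).det := by
  simp [adjugate_fin_succ_eq_det_submatrix]

theorem adjugate_last_last :
    adjugate A (Fin.last n) (Fin.last n) = (A.submatrix Fin.castSucc Fin.castSucc).det := by
  simp [adjugate_fin_succ_eq_det_submatrix, ← two_mul, pow_mul]

theorem adjugate_zero_last :
    adjugate A 0 (Fin.last n) = (-1) ^ n * (A.submatrix Fin.castSucc Fin.succ).det := by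
  simp [adjugate_fin_succ_eq_det_submatrix]

theorem adjugate_last_zero :
    adjugate A (Fin.last n) 0 = (-1) ^ n * (A.submatrix Fin.succ Fin.castSucc).det := by
  simp [adjugate_fin_succ_eq_det_submatrix]

theorem sq_det_submatrix_castSucc_succ_add_det_submatrix_succ_castSucc {t : R}
    (hA : A + Aᵀ = t • of fun _ _ => 1) :
    ((A.submatrix Fin.castSucc Fin.succ).det + (A.submatrix Fin.succ Fin.castSucc).det) ^ 2 =
      4 * (A.submatrix Fin.castSucc Fin.castSucc).det * (A.submatrix Fin.succ Fin.succ).det := by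
  have h := adjugate_add_transpose_sq hA 0 (Fin.last n)
  rw [adjugate_zero_zero, adjugate_last_last, adjugate_zero_last, adjugate_last_zero] at h
  have hsign : ((-1 : R) ^ n) ^ 2 = 1 := by rw [← pow_mul, pow_mul', neg_one_sq, one_pow]
  linear_combination h -
    ((A.submatrix Fin.castSucc Fin.succ).det + (A.submatrix Fin.succ Fin.castSucc).det) ^ 2 * hsign

end

/-- Bayat–Teimoori, stated for matrices of size `n + 2 ≥ 2`. -/
theorem stmt_14 (n : ℕ) (A : Matrix (Fin (n + 2)) (Fin (n + 2)) ℝ)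
    (α : ℝ) (hA : A + Aᵀ = α • Matrix.of (fun _ _ => (1 : ℝ))) :
    Real.sqrt ((A.submatrix Fin.castSucc Fin.castSucc).det *
        (A.submatrix Fin.succ Fin.succ).det) =
      |((A.submatrix Fin.castSucc Fin.succ).det +
          (A.submatrix Fin.succ Fin.castSucc).det) / 2| := by
  have h := sq_det_submatrix_castSucc_succ_add_det_submatrix_succ_castSucc A hA
  rw [← Real.sqrt_sq_eq_abs]
  congr 1
  linear_combination -h / 4
end

section
/- If A is an n×n real matrix with (A+Aᵀ)/2 positive semidefinite, then det(A) ≥ 0; if (A+Aᵀ)/2 is positive definite, then det(A) > 0. -/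
/-!
The symmetric part of `A` has the same quadratic form as `A`, so the hypotheses say that
`x ⬝ᵥ A *ᵥ x` is nonnegative, resp. positive for `x ≠ 0`. Positivity of the form is preserved along
the segment `s ↦ (1 - s) • 1 + s • A` and forces each matrix on it to be invertible; since the
determinant is `1` at `s = 0`, by the intermediate value theorem it stays positive up to `A`.
The semidefinite case follows by applying this to `A + ε • 1` and letting `ε → 0⁺`.
-/

open Matrix

namespace Matrix

variable {ι : Type*} [Fintype ι]

theorem dotProduct_transpose_mulVec_self (A : Matrix ι ι ℝ) (x : ι → ℝ) :
    x ⬝ᵥ Aᵀ *ᵥ x = x ⬝ᵥ A *ᵥ x := by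
  rw [mulVec_transpose, dotProduct_comm, dotProduct_mulVec]

theorem dotProduct_half_add_transpose_mulVec_self (A : Matrix ι ι ℝ) (x : ι → ℝ) :
    x ⬝ᵥ ((1 / 2 : ℝ) • (A + Aᵀ)) *ᵥ x = x ⬝ᵥ A *ᵥ x := by
  rw [smul_mulVec, add_mulVec, dotProduct_smul, dotProduct_add,
    dotProduct_transpose_mulVec_self, smul_eq_mul]
  ring

variable [DecidableEq ι]

theorem det_ne_zero_of_dotProduct_mulVec_pos {A : Matrix ι ι ℝ}
    (hA : ∀ x ≠ 0, 0 < x ⬝ᵥ A *ᵥ x) : A.det ≠ 0 := by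
  intro hdet
  obtain ⟨v, hv, hAv⟩ := exists_mulVec_eq_zero_iff.2 hdet
  simpa [hAv] using hA v hv

theorem dotProduct_lineMap_one_mulVec_pos {A : Matrix ι ι ℝ}
    (hA : ∀ x ≠ 0, 0 < x ⬝ᵥ A *ᵥ x) {s : ℝ} (hs : s ∈ Set.Icc (0 : ℝ) 1) {x : ι → ℝ}
    (hx : x ≠ 0) : 0 < x ⬝ᵥ AffineMap.lineMap 1 A s *ᵥ x := by
  have hxx : 0 < x ⬝ᵥ x := by simpa using dotProduct_star_self_pos_iff.2 hx
  rw [AffineMap.lineMap_apply_module, add_mulVec, smul_mulVec, smul_mulVec, one_mulVec,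
    dotProduct_add, dotProduct_smul, dotProduct_smul, smul_eq_mul, smul_eq_mul]
  rcases hs.1.eq_or_lt with rfl | hs0
  · simpa using hxx
  · exact add_pos_of_nonneg_of_pos (mul_nonneg (sub_nonneg.2 hs.2) hxx.le)
      (mul_pos hs0 (hA x hx))

theorem det_pos_of_dotProduct_mulVec_pos {A : Matrix ι ι ℝ}
    (hA : ∀ x ≠ 0, 0 < x ⬝ᵥ A *ᵥ x) : 0 < A.det := by
  by_contra! hle
  have hcont : ContinuousOn (fun s : ℝ => (AffineMap.lineMap 1 A s : Matrix ι ι ℝ).det)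
      (Set.Icc 0 1) := by
    fun_prop
  obtain ⟨s, hs, hdet⟩ := intermediate_value_Icc' zero_le_one hcont
    ⟨by simpa using hle, by simp⟩
  exact det_ne_zero_of_dotProduct_mulVec_pos
    (fun x hx => dotProduct_lineMap_one_mulVec_pos hA hs hx) hdet

theorem det_nonneg_of_dotProduct_mulVec_nonneg {A : Matrix ι ι ℝ}
    (hA : ∀ x, 0 ≤ x ⬝ᵥ A *ᵥ x) : 0 ≤ A.det := by
  have hshift : ∀ ε > (0 : ℝ), 0 < (A + ε • 1).det := fun ε hε =>
    det_pos_of_dotProduct_mulVec_pos fun x hx => by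
      have hxx : 0 < x ⬝ᵥ x := by simpa using dotProduct_star_self_pos_iff.2 hx
      rw [add_mulVec, smul_mulVec, one_mulVec, dotProduct_add, dotProduct_smul, smul_eq_mul]
      exact add_pos_of_nonneg_of_pos (hA x) (mul_pos hε hxx)
  have hlim : Filter.Tendsto (fun ε : ℝ => (A + ε • 1).det) (nhdsWithin 0 (Set.Ioi 0))
      (nhds A.det) := by
    have : Continuous fun ε : ℝ => (A + ε • 1).det := by fun_prop
    simpa using (this.tendsto 0).mono_left nhdsWithin_le_nhds
  exact ge_of_tendsto hlim (eventually_nhdsWithin_of_forall fun ε hε => (hshift ε hε).le)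

end Matrix

theorem stmt_17 (n : ℕ) (A : Matrix (Fin n) (Fin n) ℝ) :
    (((1 / 2 : ℝ) • (A + Aᵀ)).PosSemidef → 0 ≤ A.det) ∧
      (((1 / 2 : ℝ) • (A + Aᵀ)).PosDef → 0 < A.det) := by
  refine ⟨fun h => det_nonneg_of_dotProduct_mulVec_nonneg fun x => ?_,
    fun h => det_pos_of_dotProduct_mulVec_pos fun x hx => ?_⟩
  · simpa only [star_trivial, dotProduct_half_add_transpose_mulVec_self]
      using h.dotProduct_mulVec_nonneg x
  · simpa only [star_trivial, dotProduct_half_add_transpose_mulVec_self]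
      using h.dotProduct_mulVec_pos hx
end
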